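/- arXiv:1609.02717 — 3 statements merged into one kernel-verified Lean document; each statement's English description precedes it below -/
import Mathlib

section
/- Let k ≥ 1 and let P₀,…,P_k ∈ ℂ[X₀,…,X_k] be homogeneous polynomials, all of the same degree d ≥ 1, whose only common zero in ℂ^{k+1} is the origin. Then the Jacobian determinant J = det((∂P_i/∂X_j)_{0≤i,j≤k}) is not the zero polynomial. -/
/-!
If the Jacobian matrix were singular, a nonzero vector `v` in its kernel would give the derivation
`D = ∑ⱼ vⱼ ∂/∂Xⱼ`, which kills every `Pᵢ` and hence the subalgebra `ℂ[P]`. By the Nullstellensatz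
every `Xⱼ` has a power in the ideal `(P)`, and since the `Pᵢ` are homogeneous of positive degree,
this makes `ℂ[X]` a finite `ℂ[P]`-module. So each `Xⱼ` is integral over `ℂ[P]`, and in
characteristic zero a derivation vanishing on `ℂ[P]` vanishes on integral elements (apply it to a
vanishing polynomial of least degree). Hence `vⱼ = D Xⱼ = 0` for all `j`, a contradiction.
-/

open MvPolynomial

noncomputable def jacDet (k : ℕ) (P : Fin (k + 1) → MvPolynomial (Fin (k + 1)) ℂ) :
    MvPolynomial (Fin (k + 1)) ℂ :=
  (Matrix.of fun i j : Fin (k + 1) => MvPolynomial.pderiv j (P i)).det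

namespace Derivation

open Polynomial

variable {R A : Type*} [CommRing R] [CommRing A] [Algebra R A]

theorem apply_aeval_of_forall_mem_eq_zero (D : Derivation R A A) {S : Subalgebra R A}
    (hD : ∀ s ∈ S, D s = 0) (x : A) (p : S[X]) :
    D (aeval x p) = aeval x (derivative p) * D x := by
  have hS : D.compAlgebraMap S = 0 := ext fun s => hD s s.2
  have hcoeffs : (D.compAlgebraMap S).mapCoeffs p = 0 := by
    ext i
    simp [mapCoeffs_apply, hS]
  simp [apply_aeval_eq, hcoeffs]

theorem eq_zero_of_isIntegral [IsDomain A] [CharZero A] (D : Derivation R A A)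
    {S : Subalgebra R A} (hD : ∀ s ∈ S, D s = 0) {x : A} (hx : IsIntegral S x) : D x = 0 := by
  classical
  have hex : ∃ n, ∃ G : S[X], G ≠ 0 ∧ aeval x G = 0 ∧ G.natDegree = n :=
    let ⟨G, hG, hGx⟩ := hx
    ⟨_, G, hG.ne_zero, hGx, rfl⟩
  obtain ⟨G, hG, hGx, hGn⟩ := Nat.find_spec hex
  have hGdeg : G.natDegree ≠ 0 := by
    intro h
    obtain ⟨c, rfl⟩ := natDegree_eq_zero.1 h
    simp_all
  have hG' : aeval x (derivative G) ≠ 0 := fun h =>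
    Nat.find_min hex (hGn ▸ natDegree_derivative_lt hGdeg)
      ⟨_, mt derivative_eq_zero.1 hGdeg, h, rfl⟩
  have hDG := D.apply_aeval_of_forall_mem_eq_zero hD x G
  rw [hGx, map_zero, eq_comm, mul_eq_zero] at hDG
  exact hDG.resolve_left hG'

end Derivation

namespace MvPolynomial

variable {σ R : Type*} [CommRing R]

theorem mkDerivation_apply_eq_sum_pderiv [Fintype σ] (f : σ → MvPolynomial σ R)
    (p : MvPolynomial σ R) : mkDerivation R f p = ∑ i, pderiv i p * f i := by
  have h : mkDerivation R f = ∑ i, f i • pderiv i := derivation_ext fun j => by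
    rw [mkDerivation_X, ← Derivation.coeFnAddMonoidHom_apply, map_sum, Finset.sum_apply]
    classical simp [pderiv_X, Pi.single_apply]
  rw [h, ← Derivation.coeFnAddMonoidHom_apply, map_sum, Finset.sum_apply]
  simp [mul_comm]

theorem X_mem_radical_of_forall_mem_zeroLocus_eq_zero {K : Type*} [Field K] [IsAlgClosed K]
    [Finite σ] {I : Ideal (MvPolynomial σ K)} (hI : ∀ z ∈ zeroLocus K I, z = 0) (j : σ) :
    X j ∈ I.radical := by
  rw [← vanishingIdeal_zeroLocus_eq_radical (K := K)]
  intro z hz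
  simp [hI z hz]

attribute [local instance] gradedAlgebra in
theorem homogeneousComponent_add_mul_of_isHomogeneous {p : MvPolynomial σ R} {j : ℕ}
    (hp : p.IsHomogeneous j) (i : ℕ) (q : MvPolynomial σ R) :
    homogeneousComponent (i + j) (q * p) = homogeneousComponent i q * p := by
  simpa [← decomposition.decompose'_apply] using
    DirectSum.coe_decompose_mul_add_of_right_mem (homogeneousSubmodule σ R) (a := q) (i := i)
      ((mem_homogeneousSubmodule j p).2 hp)

theorem exists_sum_mul_eq_of_isHomogeneous {ι : Type*} [Fintype ι] {P : ι → MvPolynomial σ R}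
    {d D : ℕ} (hP : ∀ l, (P l).IsHomogeneous d) (hdD : d ≤ D) {q : MvPolynomial σ R}
    (hq : q.IsHomogeneous D) (hmem : q ∈ Ideal.span (Set.range P)) :
    ∃ c : ι → MvPolynomial σ R, (∀ l, (c l).IsHomogeneous (D - d)) ∧ ∑ l, c l * P l = q := by
  obtain ⟨c, rfl⟩ := Ideal.mem_span_range_iff_exists_fun.1 hmem
  refine ⟨fun l => homogeneousComponent (D - d) (c l),
    fun l => homogeneousComponent_isHomogeneous _ _, ?_⟩
  conv_rhs => rw [← homogeneousComponent_eq_self hq, ← Nat.sub_add_cancel hdD, map_sum]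
  exact Finset.sum_congr rfl fun l _ =>
    (homogeneousComponent_add_mul_of_isHomogeneous (hP l) _ _).symm

theorem mem_of_forall_monomial_one_mem {S : Type*} [Semiring S] [Module S (MvPolynomial σ R)]
    [SMul R S] [IsScalarTower R S (MvPolynomial σ R)] (M : Submodule S (MvPolynomial σ R))
    {q : MvPolynomial σ R} (h : ∀ m ∈ q.support, monomial m 1 ∈ M) : q ∈ M := by
  rw [q.as_sum]
  refine Submodule.sum_mem _ fun m hm => ?_
  rw [← mul_one (coeff m q), ← smul_eq_mul, ← smul_monomial]
  exact M.smul_of_tower_mem _ (h m hm)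

/-- Monomials with all exponents below `N` span; a larger monomial `Xᵐ` is `Xᵐ' Xᵢᴺ` with
`Xᵢᴺ = ∑ cₗ Pₗ`, where the `cₗ` can be taken homogeneous, so that each `Xᵐ' cₗ` has degree
`deg m - d < deg m`. -/
theorem finite_adjoin_range_of_X_pow_mem [Finite σ] {ι : Type*} [Fintype ι]
    {P : ι → MvPolynomial σ R} {d N : ℕ} (hd : 0 < d) (hdN : d ≤ N)
    (hP : ∀ l, (P l).IsHomogeneous d) (hX : ∀ j, X j ^ N ∈ Ideal.span (Set.range P)) :
    Module.Finite (Algebra.adjoin R (Set.range P)) (MvPolynomial σ R) := by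
  set M := Submodule.span (Algebra.adjoin R (Set.range P))
    ((fun m => monomial m (1 : R)) '' {m : σ →₀ ℕ | ∀ i, m i < N})
  have hfin : {m : σ →₀ ℕ | ∀ i, m i < N}.Finite :=
    ((Set.Finite.pi (t := fun _ => Set.Iio N) fun _ => Set.finite_Iio N).preimage
      Finsupp.equivFunOnFinite.injective.injOn).subset fun m hm i _ => hm i
  suffices hmon : ∀ m : σ →₀ ℕ, monomial m 1 ∈ M from
    ⟨Submodule.fg_def.2 ⟨_, hfin.image _,
      eq_top_iff.2 fun q _ => mem_of_forall_monomial_one_mem M fun m _ => hmon m⟩⟩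
  intro m
  induction hD : m.degree using Nat.strong_induction_on generalizing m with
  | _ D ih =>
  by_cases hsmall : ∀ i, m i < N
  · exact Submodule.subset_span ⟨m, hsmall, rfl⟩
  push Not at hsmall
  obtain ⟨i, hi⟩ := hsmall
  obtain ⟨c, hc, hcP⟩ :=
    exists_sum_mul_eq_of_isHomogeneous hP hdN (isHomogeneous_X_pow i N) (hX i)
  have hle : Finsupp.single i N ≤ m := Finsupp.single_le_iff.2 hi
  have hdeg : (m - Finsupp.single i N).degree + N = D := by
    conv_rhs => rw [← hD, ← tsub_add_cancel_of_le hle, map_add, Finsupp.degree_single]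
  have hsplit : monomial m (1 : R) = monomial (m - Finsupp.single i N) 1 * X i ^ N := by
    rw [X_pow_eq_monomial, monomial_mul, tsub_add_cancel_of_le hle, mul_one]
  rw [hsplit, ← hcP, Finset.mul_sum]
  refine Submodule.sum_mem _ fun l _ => ?_
  rw [← mul_assoc, mul_comm]
  refine M.smul_mem ⟨P l, Algebra.subset_adjoin ⟨l, rfl⟩⟩
    (mem_of_forall_monomial_one_mem M fun m' hm' => ih _ ?_ m' rfl)
  have hm'deg := (isHomogeneous_monomial (1 : R) rfl).mul (hc l) (mem_support_iff.1 hm')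
  rw [Pi.one_def, ← Finsupp.degree_eq_weight_one] at hm'deg
  omega

end MvPolynomial

theorem jacobian_ne_zero_general (k d : ℕ) (hd : 1 ≤ d)
    (P : Fin (k + 1) → MvPolynomial (Fin (k + 1)) ℂ)
    (hhom : ∀ i, (P i).IsHomogeneous d)
    (hzero : ∀ z : Fin (k + 1) → ℂ, (∀ i, MvPolynomial.eval z (P i) = 0) → z = 0) :
    jacDet k P ≠ 0 := by
  intro hJ
  obtain ⟨v, hv, hAv⟩ := Matrix.exists_mulVec_eq_zero_iff.2 hJ
  have hrad := X_mem_radical_of_forall_mem_zeroLocus_eq_zero (I := Ideal.span (Set.range P))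
    fun z hz => hzero z fun i => hz _ (Ideal.subset_span ⟨i, rfl⟩)
  obtain ⟨N, hdN, hN⟩ : ∃ N, d ≤ N ∧ ∀ j, X j ^ N ∈ Ideal.span (Set.range P) := by
    choose n hn using hrad
    exact ((Filter.eventually_ge_atTop d).and <| Filter.eventually_all.2 fun j =>
      (Filter.eventually_ge_atTop (n j)).mono fun _ => Ideal.pow_mem_of_pow_mem _ (hn j)).exists
  have := finite_adjoin_range_of_X_pow_mem hd hdN hhom hN
  have hDP : ∀ q ∈ Algebra.adjoin ℂ (Set.range P), mkDerivation ℂ v q = 0 := fun q hq =>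
    Derivation.eqOn_adjoin (D2 := 0) (by
      rintro _ ⟨i, rfl⟩
      simpa [mkDerivation_apply_eq_sum_pderiv, Matrix.mulVec, dotProduct, jacDet]
        using congrFun hAv i) hq
  exact hv (funext fun j => by
    simpa using (mkDerivation ℂ v).eq_zero_of_isIntegral hDP (IsIntegral.of_finite _ (X j)))

/-- If `P₀, …, P_k` are homogeneous of common degree `d ≥ 1` with only common zero the origin,
then their Jacobian determinant is not the zero polynomial. -/
theorem jacobian_ne_zero (k d : ℕ) (hk : 1 ≤ k) (hd : 1 ≤ d)
    (P : Fin (k + 1) → MvPolynomial (Fin (k + 1)) ℂ)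
    (hhom : ∀ i, (P i).IsHomogeneous d)
    (hzero : ∀ z : Fin (k + 1) → ℂ, (∀ i, MvPolynomial.eval z (P i) = 0) → z = 0) :
    jacDet k P ≠ 0 :=
  jacobian_ne_zero_general k d hd P hhom hzero
end

section
/- Let k ≥ 2, let B ⊆ ℂᵏ be an open ball centered at the origin, and let f = (f₁,…,f_k) : B → ℂᵏ be holomorphic such that f_k(z) = 0 for every z ∈ B with z_k = 0. Assume that det Df(z) = 0 for every z ∈ B with z_k = 0, and that the restricted Jacobian μ(z) = det((∂f_i/∂z_j(z))_{1≤i,j≤k−1}) is not identically zero on {z ∈ B : z_k = 0}. Then ∂f_k/∂z_k(z) = 0 for every z ∈ B with z_k = 0. -/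
/-!
On the slice `z_k = 0`, invariance kills the entries `∂f_k/∂z_j` (`j < k`) of the last row of the
Jacobian matrix, so there `det Df = ∂f_k/∂z_k · μ`. Restricted to the complex line through two
points of the slice, both factors are holomorphic in one variable: partial derivatives of a
holomorphic map are holomorphic along lines, because the difference quotients converge to them
locally uniformly (the Schwarz lemma applied to the slope function gives the rate). Their product
vanishes on a connected domain and `μ` does not vanish identically, so by the identity theorem
`∂f_k/∂z_k` vanishes.
-/

open Metric Set Filter Topology

section Holomorphic

variable {F : Type*} [NormedAddCommGroup F] [NormedSpace ℂ F] [CompleteSpace F]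

namespace Complex

theorem norm_dslope_sub_deriv_le {g : ℂ → F} {c : ℂ} {ρ M : ℝ} (hρ : 0 < ρ)
    (hg : DifferentiableOn ℂ g (closedBall c ρ)) (hM : ∀ z ∈ closedBall c ρ, ‖g z‖ ≤ M)
    {s : ℂ} (hs : s ∈ ball c ρ) :
    ‖dslope g c s - deriv g c‖ ≤ 4 * M / ρ ^ 2 * ‖s - c‖ := by
  have hk : DifferentiableOn ℂ (dslope g c) (closedBall c ρ) :=
    (differentiableOn_dslope (closedBall_mem_nhds c hρ)).2 hg
  have hbound : ∀ w ∈ closedBall c ρ, ‖dslope g c w‖ ≤ 2 * M / ρ := by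
    intro w hw
    refine norm_le_of_forall_mem_frontier_norm_le isBounded_ball
      (hk.diffContOnCl_ball subset_rfl) (fun ζ hζ => ?_) (by rwa [closure_ball c hρ.ne'])
    rw [frontier_ball c hρ.ne', mem_sphere_iff_norm] at hζ
    have hζc : ζ ≠ c := by rintro rfl; simp only [sub_self, norm_zero] at hζ; exact hρ.ne hζ
    rw [dslope_of_ne _ hζc, slope_def_module, norm_smul, norm_inv, hζ, inv_mul_eq_div]
    gcongr
    calc ‖g ζ - g c‖ ≤ ‖g ζ‖ + ‖g c‖ := norm_sub_le _ _
      _ ≤ M + M := add_le_add (hM ζ (by simp [dist_eq_norm, hζ])) (hM c (mem_closedBall_self hρ.le))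
      _ = 2 * M := by ring
  have hmaps : MapsTo (dslope g c) (ball c ρ) (closedBall (dslope g c c) (4 * M / ρ)) := by
    intro w hw
    rw [mem_closedBall, dist_eq_norm]
    calc ‖dslope g c w - dslope g c c‖ ≤ ‖dslope g c w‖ + ‖dslope g c c‖ := norm_sub_le _ _
      _ ≤ 2 * M / ρ + 2 * M / ρ :=
        add_le_add (hbound w (ball_subset_closedBall hw)) (hbound c (mem_closedBall_self hρ.le))
      _ = 4 * M / ρ := by ring
  have := dist_le_div_mul_dist_of_mapsTo_ball (hk.mono ball_subset_closedBall) hmaps hs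
  rwa [dist_eq_norm, dist_eq_norm, dslope_same, div_div, ← sq] at this

theorem differentiableOn_deriv_snd {Φ : ℂ × ℂ → F} {W : Set (ℂ × ℂ)} (hW : IsOpen W)
    (hΦ : DifferentiableOn ℂ Φ W) (s₀ : ℂ) :
    DifferentiableOn ℂ (fun t => deriv (fun s => Φ (t, s)) s₀) {t | (t, s₀) ∈ W} := by
  intro t₀ ht₀
  obtain ⟨r, hr, hrW⟩ := nhds_basis_closedBall.mem_iff.1 (hW.mem_nhds ht₀)
  rw [← closedBall_prod_same] at hrW
  obtain ⟨M, hM⟩ := ((isCompact_closedBall _ r).prod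
    (isCompact_closedBall _ r)).exists_bound_of_continuousOn (hΦ.continuousOn.mono hrW)
  have hslice : ∀ t ∈ closedBall t₀ r,
      DifferentiableOn ℂ (fun s => Φ (t, s)) (closedBall s₀ r) := fun t ht =>
    hΦ.comp (by fun_prop) fun s hs => hrW ⟨ht, hs⟩
  have hunif : TendstoUniformlyOn (fun s t => dslope (fun s => Φ (t, s)) s₀ s)
      (fun t => deriv (fun s => Φ (t, s)) s₀) (𝓝[≠] s₀) (ball t₀ r) := by
    rw [Metric.tendstoUniformlyOn_iff]
    intro ε hε
    have hlim : Tendsto (fun s => 4 * M / r ^ 2 * ‖s - s₀‖) (𝓝 s₀) (𝓝 0) := by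
      simpa using ((continuous_sub_right s₀).norm.const_mul (4 * M / r ^ 2)).tendsto s₀
    filter_upwards [nhdsWithin_le_nhds (hlim.eventually (gt_mem_nhds hε)),
      nhdsWithin_le_nhds (ball_mem_nhds s₀ hr)] with s hsε hs t ht
    rw [dist_comm, dist_eq_norm]
    exact (norm_dslope_sub_deriv_le hr (hslice t (ball_subset_closedBall ht))
      (fun s' hs' => hM _ ⟨ball_subset_closedBall ht, hs'⟩) hs).trans_lt hsε
  have hquot : ∀ᶠ s in 𝓝[≠] s₀,
      DifferentiableOn ℂ (fun t => dslope (fun s => Φ (t, s)) s₀ s) (ball t₀ r) := by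
    filter_upwards [self_mem_nhdsWithin, nhdsWithin_le_nhds (ball_mem_nhds s₀ hr)] with s hne hs
    simp only [dslope_of_ne _ hne, slope_def_module]
    refine ((hΦ.comp (f := fun t => (t, s)) (by fun_prop) fun t ht =>
      hrW ⟨ball_subset_closedBall ht, ball_subset_closedBall hs⟩).sub
      (hΦ.comp (f := fun t => (t, s₀)) (by fun_prop) fun t ht =>
        hrW ⟨ball_subset_closedBall ht, mem_closedBall_self hr.le⟩)).const_smul _
  exact ((hunif.tendstoLocallyUniformlyOn.differentiableOn hquot isOpen_ball).differentiableAt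
    (ball_mem_nhds t₀ hr)).differentiableWithinAt

end Complex

theorem DifferentiableOn.differentiableOn_fderiv_apply_line {X : Type*} [NormedAddCommGroup X]
    [NormedSpace ℂ X] {f : X → F} {U : Set X} (hU : IsOpen U) (hf : DifferentiableOn ℂ f U)
    (c u v : X) :
    DifferentiableOn ℂ (fun t : ℂ => fderiv ℂ f (c + t • u) v) {t | c + t • u ∈ U} := by
  have hW : IsOpen {p : ℂ × ℂ | c + p.1 • u + p.2 • v ∈ U} := hU.preimage (by fun_prop)
  have hΦ : DifferentiableOn ℂ (fun p : ℂ × ℂ => f (c + p.1 • u + p.2 • v))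
      {p | c + p.1 • u + p.2 • v ∈ U} := hf.comp (by fun_prop) fun _ hp => hp
  have hline : {t : ℂ | c + t • u ∈ U} =
      {t | (t, (0 : ℂ)) ∈ {p : ℂ × ℂ | c + p.1 • u + p.2 • v ∈ U}} := by
    ext; simp
  rw [hline]
  exact (Complex.differentiableOn_deriv_snd hW hΦ 0).congr fun t ht =>
    ((hf.differentiableAt (hU.mem_nhds (by simpa using ht))).lineDeriv_eq_fderiv).symm

end Holomorphic

theorem Convex.preimage_line {X : Type*} [NormedAddCommGroup X] [NormedSpace ℂ X] {s : Set X}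
    (hs : Convex ℝ s) (c u : X) : Convex ℝ {t : ℂ | c + t • u ∈ s} := by
  intro x hx y hy a b ha hb hab
  have hcomb : a • (c + x • u) + b • (c + y • u) = c + (a • x + b • y) • u := by
    rw [smul_add, smul_add, add_add_add_comm, ← add_smul, hab, one_smul, ← smul_assoc,
      ← smul_assoc, ← add_smul]
  simpa only [mem_ofPred_eq, ← hcomb] using hs hx hy ha hb hab

theorem DifferentiableAt.map_fderiv_apply_eq_zero {𝕜 X F G : Type*} [NontriviallyNormedField 𝕜]
    [NormedAddCommGroup X] [NormedSpace 𝕜 X] [NormedAddCommGroup F] [NormedSpace 𝕜 F]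
    [NormedAddCommGroup G] [NormedSpace 𝕜 G] {f : X → F} {z w : X}
    (hf : DifferentiableAt 𝕜 f z) (ℓ : F →L[𝕜] G) (h : ∀ᶠ t : 𝕜 in 𝓝 0, ℓ (f (z + t • w)) = 0) :
    ℓ (fderiv 𝕜 f z w) = 0 := by
  have hline : HasDerivAt (fun t : 𝕜 => ℓ (f (z + t • w))) (ℓ (fderiv 𝕜 f z w)) 0 := by
    have hf' : HasFDerivAt f (fderiv 𝕜 f z) (z + (0 : 𝕜) • w) := by simpa using hf.hasFDerivAt
    simpa [Function.comp_def] using ℓ.hasFDerivAt.comp_hasDerivAt _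
      (hf'.comp_hasDerivAt _ (((hasDerivAt_id (0 : 𝕜)).smul_const w).const_add z))
  have h' : (fun t : 𝕜 => ℓ (f (z + t • w))) =ᶠ[𝓝 0] fun _ => 0 := h
  rw [← hline.deriv, h'.deriv_eq, deriv_const]

theorem AnalyticOnNhd.det {𝕜 X ι : Type*} [NontriviallyNormedField 𝕜] [NormedAddCommGroup X]
    [NormedSpace 𝕜 X] [Fintype ι] [DecidableEq ι] {A : X → Matrix ι ι 𝕜} {s : Set X}
    (hA : ∀ i j, AnalyticOnNhd 𝕜 (fun x => A x i j) s) :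
    AnalyticOnNhd 𝕜 (fun x => (A x).det) s := by
  simp only [Matrix.det_apply']
  exact Finset.analyticOnNhd_fun_sum _ fun σ _ =>
    analyticOnNhd_const.mul (Finset.analyticOnNhd_fun_prod _ fun i _ => hA (σ i) i)

theorem Matrix.det_eq_mul_det_submatrix_castSucc {R : Type*} [CommRing R] {n : ℕ}
    (M : Matrix (Fin (n + 1)) (Fin (n + 1)) R) (h : ∀ j : Fin n, M (Fin.last n) j.castSucc = 0) :
    M.det = M (Fin.last n) (Fin.last n) * (M.submatrix Fin.castSucc Fin.castSucc).det := by
  rw [Matrix.det_succ_row M (Fin.last n), Fin.sum_univ_castSucc]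
  simp only [h, mul_zero, zero_mul, Finset.sum_const_zero, zero_add, Fin.succAbove_last,
    Fin.val_last, (Even.add_self n).neg_one_pow, one_mul]

section Jacobian

variable {ι : Type*} [Fintype ι] [DecidableEq ι]

noncomputable def jacobian (f : EuclideanSpace ℂ ι → EuclideanSpace ℂ ι) (z : EuclideanSpace ℂ ι) :
    Matrix ι ι ℂ :=
  Matrix.of fun i j => fderiv ℂ f z (EuclideanSpace.single j 1) i

theorem DifferentiableOn.differentiableOn_jacobian_apply_line
    {f : EuclideanSpace ℂ ι → EuclideanSpace ℂ ι} {U : Set (EuclideanSpace ℂ ι)} (hU : IsOpen U)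
    (hf : DifferentiableOn ℂ f U) (c u : EuclideanSpace ℂ ι) (i j : ι) :
    DifferentiableOn ℂ (fun t : ℂ => jacobian f (c + t • u) i j) {t | c + t • u ∈ U} :=
  (EuclideanSpace.proj (𝕜 := ℂ) i).differentiable.comp_differentiableOn
    (hf.differentiableOn_fderiv_apply_line hU c u (EuclideanSpace.single j 1))

end Jacobian

section Slice

variable {n : ℕ} {R : ℝ} {f : EuclideanSpace ℂ (Fin (n + 1)) → EuclideanSpace ℂ (Fin (n + 1))}

theorem jacobian_last_castSucc_eq_zero (hf : DifferentiableOn ℂ f (ball 0 R))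
    (hinv : ∀ z ∈ ball (0 : EuclideanSpace ℂ (Fin (n + 1))) R,
      z (Fin.last n) = 0 → f z (Fin.last n) = 0)
    {z : EuclideanSpace ℂ (Fin (n + 1))} (hz : z ∈ ball 0 R) (hzl : z (Fin.last n) = 0)
    (j : Fin n) : jacobian f z (Fin.last n) j.castSucc = 0 := by
  set w : EuclideanSpace ℂ (Fin (n + 1)) := EuclideanSpace.single j.castSucc 1
  have hline : ∀ᶠ t : ℂ in 𝓝 0, z + t • w ∈ ball 0 R :=
    (Continuous.tendsto (by fun_prop) 0).eventually (isOpen_ball.mem_nhds (by simpa using hz))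
  refine (hf.differentiableAt (isOpen_ball.mem_nhds hz)).map_fderiv_apply_eq_zero
    (EuclideanSpace.proj (Fin.last n)) (hline.mono fun t ht => hinv _ ht ?_)
  simp [hzl, (Fin.castSucc_lt_last j).ne]

theorem det_jacobian_eq_mul_of_mem_slice (hf : DifferentiableOn ℂ f (ball 0 R))
    (hinv : ∀ z ∈ ball (0 : EuclideanSpace ℂ (Fin (n + 1))) R,
      z (Fin.last n) = 0 → f z (Fin.last n) = 0)
    {z : EuclideanSpace ℂ (Fin (n + 1))} (hz : z ∈ ball 0 R) (hzl : z (Fin.last n) = 0) :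
    (jacobian f z).det = jacobian f z (Fin.last n) (Fin.last n) *
      ((jacobian f z).submatrix Fin.castSucc Fin.castSucc).det :=
  Matrix.det_eq_mul_det_submatrix_castSucc _ (jacobian_last_castSucc_eq_zero hf hinv hz hzl)

end Slice

theorem last_partial_vanishes_on_slice_general (n : ℕ) (R : ℝ)
    (f : EuclideanSpace ℂ (Fin (n + 1)) → EuclideanSpace ℂ (Fin (n + 1)))
    (hf : DifferentiableOn ℂ f (Metric.ball (0 : EuclideanSpace ℂ (Fin (n + 1))) R))
    (hinv : ∀ z ∈ Metric.ball (0 : EuclideanSpace ℂ (Fin (n + 1))) R,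
      z (Fin.last n) = 0 → f z (Fin.last n) = 0)
    (hdet : ∀ z ∈ Metric.ball (0 : EuclideanSpace ℂ (Fin (n + 1))) R,
      z (Fin.last n) = 0 →
        (Matrix.of fun i j : Fin (n + 1) =>
          fderiv ℂ f z (EuclideanSpace.single j 1) i).det = 0)
    (hmu : ∃ z ∈ Metric.ball (0 : EuclideanSpace ℂ (Fin (n + 1))) R,
      z (Fin.last n) = 0 ∧
        (Matrix.of fun i j : Fin n =>
          fderiv ℂ f z (EuclideanSpace.single (Fin.castSucc j) 1) (Fin.castSucc i)).det ≠ 0) :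
    ∀ z ∈ Metric.ball (0 : EuclideanSpace ℂ (Fin (n + 1))) R,
      z (Fin.last n) = 0 →
        fderiv ℂ f z (EuclideanSpace.single (Fin.last n) 1) (Fin.last n) = 0 := by
  obtain ⟨z₀, hz₀, hz₀l, hμ₀⟩ := hmu
  intro z₁ hz₁ hz₁l
  set T := {t : ℂ | z₀ + t • (z₁ - z₀) ∈ ball 0 R}
  have hT : IsOpen T := isOpen_ball.preimage (by fun_prop)
  have hslice : ∀ t : ℂ, (z₀ + t • (z₁ - z₀)) (Fin.last n) = 0 := by simp [hz₀l, hz₁l]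
  have hentry := hf.differentiableOn_jacobian_apply_line isOpen_ball z₀ (z₁ - z₀)
  have hG := (hentry (Fin.last n) (Fin.last n)).analyticOnNhd hT
  have hμ := AnalyticOnNhd.det (A := fun t => (jacobian f (z₀ + t • (z₁ - z₀))).submatrix
    Fin.castSucc Fin.castSucc) fun i j => (hentry _ _).analyticOnNhd hT
  have hprod : ∀ t ∈ T, jacobian f (z₀ + t • (z₁ - z₀)) (Fin.last n) (Fin.last n) *
      ((jacobian f (z₀ + t • (z₁ - z₀))).submatrix Fin.castSucc Fin.castSucc).det = 0 :=
    fun t ht => by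
      rw [← det_jacobian_eq_mul_of_mem_slice hf hinv ht (hslice t)]
      exact hdet _ ht (hslice t)
  have hTconn : IsPreconnected T := ((convex_ball 0 R).preimage_line z₀ (z₁ - z₀)).isPreconnected
  rcases hG.eq_zero_or_eq_zero_of_mul_eq_zero hμ hprod hTconn with h | h
  · have hG₁ : jacobian f z₁ (Fin.last n) (Fin.last n) = 0 := by
      simpa using h 1 (by simpa [T] using hz₁)
    exact hG₁
  · have hμ₀' : ((jacobian f z₀).submatrix Fin.castSucc Fin.castSucc).det ≠ 0 := hμ₀
    exact absurd (by simpa using h 0 (by simpa [T] using hz₀)) hμ₀'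

/-- Let `f` be holomorphic on an open ball `B ⊆ ℂᵏ` (dimension `k = n+1 ≥ 2`) centered at the
origin, with the hyperplane `{z_k = 0}` invariant. If the Jacobian determinant of `f` vanishes
everywhere on the slice `{z ∈ B : z_k = 0}` but the restricted Jacobian
`μ = det((∂f_i/∂z_j)_{i,j<k})` is not identically zero there, then `∂f_k/∂z_k` vanishes
everywhere on the slice. -/
theorem last_partial_vanishes_on_slice (n : ℕ) (hn : 1 ≤ n) (R : ℝ) (hR : 0 < R)
    (f : EuclideanSpace ℂ (Fin (n + 1)) → EuclideanSpace ℂ (Fin (n + 1)))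
    (hf : DifferentiableOn ℂ f (Metric.ball (0 : EuclideanSpace ℂ (Fin (n + 1))) R))
    (hinv : ∀ z ∈ Metric.ball (0 : EuclideanSpace ℂ (Fin (n + 1))) R,
      z (Fin.last n) = 0 → f z (Fin.last n) = 0)
    (hdet : ∀ z ∈ Metric.ball (0 : EuclideanSpace ℂ (Fin (n + 1))) R,
      z (Fin.last n) = 0 →
        (Matrix.of fun i j : Fin (n + 1) =>
          fderiv ℂ f z (EuclideanSpace.single j 1) i).det = 0)
    (hmu : ∃ z ∈ Metric.ball (0 : EuclideanSpace ℂ (Fin (n + 1))) R,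
      z (Fin.last n) = 0 ∧
        (Matrix.of fun i j : Fin n =>
          fderiv ℂ f z (EuclideanSpace.single (Fin.castSucc j) 1) (Fin.castSucc i)).det ≠ 0) :
    ∀ z ∈ Metric.ball (0 : EuclideanSpace ℂ (Fin (n + 1))) R,
      z (Fin.last n) = 0 →
        fderiv ℂ f z (EuclideanSpace.single (Fin.last n) 1) (Fin.last n) = 0 :=
  last_partial_vanishes_on_slice_general n R f hf hinv hdet hmu
end

section
/- Let U ⊆ ℂᵏ be open, x₀ ∈ U, and let P₁,…,P_n : U → ℂ be holomorphic with P_j(x₀) = 0 for all j. Assume the map Φ = (P₁,…,P_n) : U → ℂⁿ has constant rank on U, i.e., the rank of DΦ(x) is the same for all x ∈ U. Then for every v ∈ ⋂_{j=1}^n ker DP_j(x₀) there exist r > 0, an open neighborhood U' ⊆ U of x₀, and a holomorphic map φ : {t ∈ ℂ : |t| < r} × U' → U such that: φ(0,x) = x for all x ∈ U'; (∂φ/∂t)(0,x₀) = v; and P_j(φ(t,x)) = P_j(x) for all j, all |t| < r and all x ∈ U'. In particular, if x ∈ U' does not lie on any of the hypersurfaces {P_j = 0}, then neither does φ(t,x)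 for any |t| < r. -/
/-!
Take a generalized inverse `σ` of `T = DΦ(x₀)` (so `T ∘ σ ∘ T = T`) and put
`h = σ ∘ Φ + (id - σ ∘ T)`. Then `Dh(x₀) = id`, so `h` has a local holomorphic inverse `ψ`,
and the flow is `φ(t, x) = ψ(h x + t • v)`. For `x` near `x₀`,
`Dh(x) = σ ∘ DΦ(x) + (id - σ ∘ T)` is invertible and sends `ker DΦ(x)` into `ker T`; by the
constant rank hypothesis both kernels have the same dimension, so `Dh(x)` maps `ker DΦ(x)`
onto `ker T`. Hence `D(Φ ∘ ψ)` kills `ker T ∋ v`, and `Φ(φ(t, x))` does not depend on `t`.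

The inverse function theorem needs strict differentiability and continuity of the derivative;
for holomorphic maps of several variables both follow from the Schwarz lemma on complex
lines.
-/

def PhiMap (k n : ℕ) (P : Fin n → (Fin k → ℂ) → ℂ) : (Fin k → ℂ) → (Fin n → ℂ) :=
  fun z j => P j z

open Metric Set Filter Asymptotics
open scoped Topology

section HolomorphicRegularity

variable {E F : Type*} [NormedAddCommGroup E] [NormedSpace ℂ E]
  [NormedAddCommGroup F] [NormedSpace ℂ F]

theorem norm_sub_le_of_differentiableOn_ball {f : E → F} {c : E} {R M : ℝ}
    (hf : DifferentiableOn ℂ f (ball c R)) (hM : ∀ x ∈ ball c R, ‖f x‖ ≤ M) {y z : E}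
    (hy : y ∈ ball c (R / 3)) (hz : z ∈ ball c (R / 3)) :
    ‖f y - f z‖ ≤ 3 * M / R * ‖y - z‖ := by
  rcases eq_or_ne y z with rfl | hyz
  · simp
  have hw : 0 < ‖y - z‖ := norm_pos_iff.2 (sub_ne_zero.2 hyz)
  have hyz' : ‖y - z‖ < 2 * R / 3 := by
    rw [← dist_eq_norm]
    linarith [dist_triangle_right y z c, mem_ball.1 hy, mem_ball.1 hz]
  have hR : 0 < R := by linarith
  set ρ := 2 * R / 3 / ‖y - z‖
  have hline : MapsTo (fun ζ : ℂ => z + ζ • (y - z)) (ball 0 ρ) (ball c R) := fun ζ hζ => by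
    have hζ : ‖ζ‖ * ‖y - z‖ < 2 * R / 3 := by
      rwa [mem_ball_zero_iff, lt_div_iff₀ hw] at hζ
    rw [mem_ball_iff_norm] at hz ⊢
    calc ‖z + ζ • (y - z) - c‖ ≤ ‖z - c‖ + ‖ζ‖ * ‖y - z‖ := by
          rw [← norm_smul, add_sub_right_comm]; exact norm_add_le _ _
      _ < R := by linarith
  -- Schwarz lemma for `f` restricted to the complex line through `z` and `y`
  set g : ℂ → F := fun ζ => f (z + ζ • (y - z))
  have hg : DifferentiableOn ℂ g (ball 0 ρ) := hf.comp (by fun_prop) hline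
  have hmaps : MapsTo g (ball 0 ρ) (closedBall (g 0) (2 * M)) := fun ζ hζ => by
    rw [mem_closedBall, dist_eq_norm, two_mul]
    exact (norm_sub_le _ _).trans
      (add_le_add (hM _ (hline hζ)) (hM _ (hline (mem_ball_self (by positivity)))))
  have h1 : (1 : ℂ) ∈ ball 0 ρ := by
    rwa [mem_ball_zero_iff, norm_one, one_lt_div hw]
  calc ‖f y - f z‖ = dist (g 1) (g 0) := by simp [g, dist_eq_norm]
    _ ≤ 2 * M / ρ * dist 1 0 := Complex.dist_le_div_mul_dist_of_mapsTo_ball hg hmaps h1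
    _ = 3 * M / R * ‖y - z‖ := by
      simp only [ρ, dist_zero_right, norm_one, mul_one]
      field_simp

theorem DifferentiableOn.exists_ball_norm_sub_sub_fderiv_le {s : Set E} {f : E → F}
    (hf : DifferentiableOn ℂ f s) (hs : IsOpen s) {x₀ : E} (hx₀ : x₀ ∈ s) {ε : ℝ} (hε : 0 < ε) :
    ∃ δ > 0, ball x₀ δ ⊆ s ∧ ∀ y ∈ ball x₀ δ, ∀ z ∈ ball x₀ δ,
      ‖f y - f z - fderiv ℂ f x₀ (y - z)‖ ≤ ε * ‖y - z‖ := by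
  set T := fderiv ℂ f x₀
  set g : E → F := fun x => f x - f x₀ - T (x - x₀)
  have hT : HasFDerivAt f T x₀ := (hf.differentiableAt (hs.mem_nhds hx₀)).hasFDerivAt
  obtain ⟨R, hR, hRs⟩ : ∃ R > 0, ∀ x ∈ ball x₀ R, ‖g x‖ ≤ ε / 3 * ‖x - x₀‖ ∧ x ∈ s :=
    eventually_nhds_iff_ball.1
      ((isLittleO_iff.1 hT.isLittleO (by positivity : 0 < ε / 3)).and (hs.mem_nhds hx₀))
  have hg : DifferentiableOn ℂ g (ball x₀ R) :=
    ((hf.mono fun x hx => (hRs x hx).2).sub_const _).sub (by fun_prop)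
  have hgR : ∀ x ∈ ball x₀ R, ‖g x‖ ≤ ε / 3 * R := fun x hx =>
    (hRs x hx).1.trans (by gcongr; exact (mem_ball_iff_norm.1 hx).le)
  refine ⟨R / 3, by positivity, fun x hx => (hRs x (ball_subset_ball (by linarith) hx)).2,
    fun y hy z hz => ?_⟩
  calc ‖f y - f z - T (y - z)‖ = ‖g y - g z‖ := by simp only [g, map_sub]; abel_nf
    _ ≤ 3 * (ε / 3 * R) / R * ‖y - z‖ := norm_sub_le_of_differentiableOn_ball hg hgR hy hz
    _ = ε * ‖y - z‖ := by field_simp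

theorem DifferentiableOn.hasStrictFDerivAt_of_isOpen {s : Set E} {f : E → F}
    (hf : DifferentiableOn ℂ f s) (hs : IsOpen s) {x : E} (hx : x ∈ s) :
    HasStrictFDerivAt f (fderiv ℂ f x) x := by
  refine .of_isLittleO (isLittleO_iff.2 fun ε hε => ?_)
  obtain ⟨δ, hδ, -, hb⟩ := hf.exists_ball_norm_sub_sub_fderiv_le hs hx hε
  filter_upwards [prod_mem_nhds (ball_mem_nhds x hδ) (ball_mem_nhds x hδ)] with p hp
    using hb p.1 hp.1 p.2 hp.2

theorem DifferentiableOn.continuousAt_fderiv {s : Set E} {f : E → F}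
    (hf : DifferentiableOn ℂ f s) (hs : IsOpen s) {x₀ : E} (hx₀ : x₀ ∈ s) :
    ContinuousAt (fderiv ℂ f) x₀ := by
  refine Metric.continuousAt_iff.2 fun ε hε => ?_
  obtain ⟨δ, hδ, hδs, hb⟩ := hf.exists_ball_norm_sub_sub_fderiv_le hs hx₀ (half_pos hε)
  refine ⟨δ, hδ, fun {x} hx => ?_⟩
  set T := fderiv ℂ f x₀
  have hD : HasFDerivAt (fun y => f y - T y) (fderiv ℂ f x - T) x :=
    (hf.differentiableAt (hs.mem_nhds (hδs hx))).hasFDerivAt.sub T.hasFDerivAt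
  have hlip : ∀ᶠ y in 𝓝 x, ‖(f y - T y) - (f x - T x)‖ ≤ ε / 2 * ‖y - x‖ := by
    filter_upwards [isOpen_ball.mem_nhds hx] with y hy
    simpa only [map_sub, sub_sub_sub_comm] using hb y hy x hx
  rw [dist_eq_norm]
  exact (hD.le_of_lip' (half_pos hε).le hlip).trans_lt (half_lt_self hε)

end HolomorphicRegularity

section LocalInverse

variable {E F : Type*} [NormedAddCommGroup E] [NormedSpace ℂ E] [CompleteSpace E]
  [NormedAddCommGroup F] [NormedSpace ℂ F]

theorem DifferentiableOn.exists_openPartialHomeomorph {U : Set E} {h : E → F}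
    (hh : DifferentiableOn ℂ h U) (hU : IsOpen U) {x₀ : E} (hx₀ : x₀ ∈ U) (f' : E ≃L[ℂ] F)
    (hf' : fderiv ℂ h x₀ = f') :
    ∃ PH : OpenPartialHomeomorph E F, ⇑PH = h ∧ x₀ ∈ PH.source ∧ PH.source ⊆ U ∧
      ∀ y ∈ PH.target, ∃ e : E ≃L[ℂ] F, (e : E →L[ℂ] F) = fderiv ℂ h (PH.symm y) ∧
        HasFDerivAt PH.symm (e.symm : F →L[ℂ] E) y := by
  have hstrict : HasStrictFDerivAt h (f' : E →L[ℂ] F) x₀ :=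
    hf' ▸ hh.hasStrictFDerivAt_of_isOpen hU hx₀
  have hinv : fderiv ℂ h ⁻¹' range ((↑) : (E ≃L[ℂ] F) → E →L[ℂ] F) ∈ 𝓝 x₀ :=
    (hh.continuousAt_fderiv hU hx₀).preimage_mem_nhds
      (ContinuousLinearEquiv.isOpen.mem_nhds ⟨f', hf'.symm⟩)
  obtain ⟨s, hsU, hs, hx₀s⟩ := _root_.mem_nhds_iff.1 (inter_mem (hU.mem_nhds hx₀) hinv)
  set PH := (hstrict.toOpenPartialHomeomorph h).restrOpen s hs
  refine ⟨PH, hstrict.toOpenPartialHomeomorph_coe,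
    ⟨hstrict.mem_toOpenPartialHomeomorph_source, hx₀s⟩, fun x hx => (hsU hx.2).1, fun y hy => ?_⟩
  have hx : PH.symm y ∈ s := (PH.map_target hy).2
  obtain ⟨e, he⟩ := (hsU hx).2
  refine ⟨e, he, PH.hasFDerivAt_symm hy ?_⟩
  rw [he]
  exact (hh.differentiableAt (hU.mem_nhds (hsU hx).1)).hasFDerivAt

end LocalInverse

section LinearAlgebra

variable {K V W : Type*} [DivisionRing K] [AddCommGroup V] [Module K V]
  [AddCommGroup W] [Module K W]

theorem LinearMap.exists_comp_comp_eq_self (f : V →ₗ[K] W) :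
    ∃ g : W →ₗ[K] V, f ∘ₗ g ∘ₗ f = f := by
  obtain ⟨s, hs⟩ := f.rangeRestrict.exists_rightInverse_of_surjective f.range_rangeRestrict
  obtain ⟨π, hπ⟩ := (LinearMap.range f).subtype.exists_leftInverse_of_injective
    (Submodule.ker_subtype _)
  refine ⟨s ∘ₗ π, LinearMap.ext fun u => ?_⟩
  have hπu : π (f u) = f.rangeRestrict u := LinearMap.congr_fun hπ (f.rangeRestrict u)
  have hsu := LinearMap.congr_fun hs (f.rangeRestrict u)
  simp only [LinearMap.comp_apply, hπu]
  exact congrArg Subtype.val hsu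

theorem LinearMap.apply_symm_eq_zero_of_rank_eq [FiniteDimensional K V] {A T : V →ₗ[K] W}
    {σ : W →ₗ[K] V} (hσ : T ∘ₗ σ ∘ₗ T = T) (e : V ≃ₗ[K] V)
    (he : ∀ u, e u = σ (A u) + (u - σ (T u))) (hrank : A.rank = T.rank) {κ : V}
    (hκ : T κ = 0) : A (e.symm κ) = 0 := by
  have hmaps : (LinearMap.ker A).map (e : V →ₗ[K] V) ≤ LinearMap.ker T := by
    rintro _ ⟨u, hu, rfl⟩
    rw [LinearMap.mem_ker, LinearEquiv.coe_coe, he, LinearMap.mem_ker.1 hu, map_zero, zero_add,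
      map_sub, sub_eq_zero]
    exact (LinearMap.congr_fun hσ u).symm
  have hfinrank : Module.finrank K (LinearMap.ker A) = Module.finrank K (LinearMap.ker T) := by
    have hA := A.finrank_range_add_finrank_ker
    have hT := T.finrank_range_add_finrank_ker
    have : Module.finrank K (LinearMap.range A) = Module.finrank K (LinearMap.range T) :=
      congrArg Cardinal.toNat hrank
    omega
  have hmap : (LinearMap.ker A).map (e : V →ₗ[K] V) = LinearMap.ker T :=
    Submodule.eq_of_le_of_finrank_eq hmaps (by rw [LinearEquiv.finrank_map_eq, hfinrank])
  obtain ⟨u, hu, rfl⟩ : κ ∈ (LinearMap.ker A).map (e : V →ₗ[K] V) := hmap ▸ hκ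
  simpa using hu

end LinearAlgebra

theorem exists_ball_prod_subset_of_mem_nhds {α X : Type*} [PseudoMetricSpace α]
    [TopologicalSpace X] {a : α} {x : X} {s : Set (α × X)} (hs : s ∈ 𝓝 (a, x)) :
    ∃ r > 0, ∃ V : Set X, IsOpen V ∧ x ∈ V ∧ ball a r ×ˢ V ⊆ s := by
  obtain ⟨u, V, hu, hau, hV, hxV, huV⟩ := mem_nhds_prod_iff'.1 hs
  obtain ⟨r, hr, hru⟩ := Metric.isOpen_iff.1 hu a hau
  exact ⟨r, hr, V, hV, hxV, (prod_mono hru le_rfl).trans huV⟩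

section Flow

variable {E F : Type*} [NormedAddCommGroup E] [NormedSpace ℂ E]
  [NormedAddCommGroup F] [NormedSpace ℂ F]

theorem apply_add_smul_eq_of_fderiv_apply_eq_zero {f : E → F} {y v : E} {r : ℝ}
    (hf : ∀ t ∈ ball (0 : ℂ) r,
      DifferentiableAt ℂ f (y + t • v) ∧ fderiv ℂ f (y + t • v) v = 0)
    {t : ℂ} (ht : t ∈ ball 0 r) : f (y + t • v) = f y := by
  have hline : ∀ s ∈ ball (0 : ℂ) r, HasDerivAt (fun s : ℂ => f (y + s • v)) 0 s := by
    intro s hs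
    have := (hf s hs).1.hasFDerivAt.comp_hasDerivAt s
      (((hasDerivAt_id s).smul_const v).const_add y)
    simpa [Function.comp_def, (hf s hs).2] using this
  have hconst := isOpen_ball.is_const_of_deriv_eq_zero (convex_ball (0 : ℂ) r).isPreconnected
    (fun s hs => (hline s hs).differentiableAt.differentiableWithinAt)
    (fun s hs => (hline s hs).deriv) ht (mem_ball_self (pos_of_mem_ball ht))
  simpa using hconst

theorem OpenPartialHomeomorph.exists_flow (PH : OpenPartialHomeomorph E E) {Φ : E → F}
    {x₀ v : E} (hx₀ : x₀ ∈ PH.source) (hPH : DifferentiableOn ℂ PH PH.source)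
    (hsymm : DifferentiableOn ℂ PH.symm PH.target)
    (hsymm₀ : HasFDerivAt PH.symm (ContinuousLinearMap.id ℂ E) (PH x₀))
    (hΦ : ∀ y ∈ PH.target,
      DifferentiableAt ℂ (Φ ∘ PH.symm) y ∧ fderiv ℂ (Φ ∘ PH.symm) y v = 0) :
    ∃ r > 0, ∃ U' : Set E, IsOpen U' ∧ x₀ ∈ U' ∧ U' ⊆ PH.source ∧ ∃ φ : ℂ → E → E,
      DifferentiableOn ℂ (fun p : ℂ × E => φ p.1 p.2) (ball 0 r ×ˢ U') ∧
      (∀ t ∈ ball (0 : ℂ) r, ∀ x ∈ U', φ t x ∈ PH.source) ∧ (∀ x ∈ U', φ 0 x = x) ∧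
      HasDerivAt (fun t => φ t x₀) v 0 ∧ ∀ t ∈ ball (0 : ℂ) r, ∀ x ∈ U', Φ (φ t x) = Φ x := by
  have hnhds :
      {p : ℂ × E | p.2 ∈ PH.source ∧ PH p.2 + p.1 • v ∈ PH.target} ∈ 𝓝 ((0 : ℂ), x₀) := by
    have hcont : ContinuousAt (fun p : ℂ × E => PH p.2 + p.1 • v) (0, x₀) :=
      ((PH.continuousAt hx₀).comp continuousAt_snd).add
        (continuousAt_fst.smul continuousAt_const)
    have htarget : PH x₀ + (0 : ℂ) • v ∈ PH.target := by simpa using PH.map_source hx₀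
    exact inter_mem (continuousAt_snd.preimage_mem_nhds (PH.open_source.mem_nhds hx₀))
      (hcont.preimage_mem_nhds (PH.open_target.mem_nhds htarget))
  obtain ⟨r, hr, U', hU', hx₀U', hsub⟩ := exists_ball_prod_subset_of_mem_nhds hnhds
  have hU'PH : U' ⊆ PH.source := fun x hx => (hsub (mk_mem_prod (mem_ball_self hr) hx)).1
  have htarget : ∀ t ∈ ball (0 : ℂ) r, ∀ x ∈ U', PH x + t • v ∈ PH.target :=
    fun t ht x hx => (hsub (mk_mem_prod ht hx)).2
  refine ⟨r, hr, U', hU', hx₀U', hU'PH, fun t x => PH.symm (PH x + t • v), ?_,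
    fun t ht x hx => PH.map_target (htarget t ht x hx),
    fun x hx => by simp [PH.left_inv (hU'PH hx)], ?_, fun t ht x hx => ?_⟩
  · rintro ⟨t, x⟩ ⟨ht, hx⟩
    have hin : DifferentiableAt ℂ (fun p : ℂ × E => PH p.2 + p.1 • v) (t, x) :=
      ((hPH.differentiableAt (PH.open_source.mem_nhds (hU'PH hx))).comp (t, x)
        differentiableAt_snd).add (differentiableAt_fst.smul_const v)
    exact ((hsymm.differentiableAt (PH.open_target.mem_nhds (htarget t ht x hx))).comp (t, x)
      hin).differentiableWithinAt
  · have hline : HasDerivAt (fun t : ℂ => PH x₀ + t • v) v 0 := by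
      simpa using ((hasDerivAt_id (0 : ℂ)).smul_const v).const_add (PH x₀)
    have hsymm₀' :
        HasFDerivAt PH.symm (ContinuousLinearMap.id ℂ E) (PH x₀ + (0 : ℂ) • v) := by
      simpa using hsymm₀
    exact hsymm₀'.comp_hasDerivAt (0 : ℂ) hline
  · have := apply_add_smul_eq_of_fderiv_apply_eq_zero (f := Φ ∘ PH.symm)
      (fun s hs => hΦ _ (htarget s hs x hx)) ht
    simpa [PH.left_inv (hU'PH hx)] using this

end Flow

section ConstantRank

variable {E F : Type*} [NormedAddCommGroup E] [NormedSpace ℂ E] [FiniteDimensional ℂ E]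
  [NormedAddCommGroup F] [NormedSpace ℂ F] [FiniteDimensional ℂ F]

theorem DifferentiableOn.exists_chart_of_rank_eq {U : Set E} {Φ : E → F}
    (hΦ : DifferentiableOn ℂ Φ U) (hU : IsOpen U) {x₀ : E} (hx₀ : x₀ ∈ U)
    (hrank : ∀ x ∈ U,
      LinearMap.rank (fderiv ℂ Φ x).toLinearMap = LinearMap.rank (fderiv ℂ Φ x₀).toLinearMap) :
    ∃ PH : OpenPartialHomeomorph E E, x₀ ∈ PH.source ∧ PH.source ⊆ U ∧
      DifferentiableOn ℂ PH PH.source ∧ DifferentiableOn ℂ PH.symm PH.target ∧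
      HasFDerivAt PH.symm (ContinuousLinearMap.id ℂ E) (PH x₀) ∧
      ∀ y ∈ PH.target, DifferentiableAt ℂ (Φ ∘ PH.symm) y ∧
        ∀ κ, fderiv ℂ Φ x₀ κ = 0 → fderiv ℂ (Φ ∘ PH.symm) y κ = 0 := by
  set T := fderiv ℂ Φ x₀
  obtain ⟨σ, hσ⟩ := T.toLinearMap.exists_comp_comp_eq_self
  set σ' : F →L[ℂ] E := LinearMap.toContinuousLinearMap σ
  set h : E → E := fun x => σ' (Φ x) + (x - σ' (T x))
  have hDh : ∀ x ∈ U, HasFDerivAt h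
      (σ'.comp (fderiv ℂ Φ x) + (ContinuousLinearMap.id ℂ E - σ'.comp T)) x := fun x hx =>
    (σ'.hasFDerivAt.comp x (hΦ.differentiableAt (hU.mem_nhds hx)).hasFDerivAt).add
      ((hasFDerivAt_id x).sub (σ'.comp T).hasFDerivAt)
  have hDh₀ : fderiv ℂ h x₀ = ContinuousLinearEquiv.refl ℂ E := by
    rw [(hDh x₀ hx₀).fderiv]; ext; simp [T]
  have hh : DifferentiableOn ℂ h U := fun x hx =>
    (hDh x hx).differentiableAt.differentiableWithinAt
  obtain ⟨PH, hPH, hx₀PH, hPHU, hsymm⟩ := hh.exists_openPartialHomeomorph hU hx₀ _ hDh₀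
  refine ⟨PH, hx₀PH, hPHU, hPH ▸ hh.mono hPHU, fun y hy => ?_, ?_, fun y hy => ?_⟩
  · obtain ⟨e, -, hd⟩ := hsymm y hy
    exact hd.differentiableAt.differentiableWithinAt
  · obtain ⟨e, he, hd⟩ := hsymm _ (PH.map_source hx₀PH)
    rw [PH.left_inv hx₀PH, hDh₀, ContinuousLinearEquiv.coe_inj] at he
    simpa [he] using hd
  · obtain ⟨e, he, hd⟩ := hsymm y hy
    have hx : PH.symm y ∈ U := hPHU (PH.map_target hy)
    rw [(hDh _ hx).fderiv] at he
    have hcomp : HasFDerivAt (Φ ∘ PH.symm) ((fderiv ℂ Φ (PH.symm y)).comp e.symm) y :=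
      (hΦ.differentiableAt (hU.mem_nhds hx)).hasFDerivAt.comp y hd
    refine ⟨hcomp.differentiableAt, fun κ hκ => ?_⟩
    rw [hcomp.fderiv]
    exact LinearMap.apply_symm_eq_zero_of_rank_eq hσ e.toLinearEquiv
      (fun u => by simpa [σ'] using congr($he u)) (hrank _ hx) hκ

end ConstantRank

theorem flow_tangent_to_intersection_general (k n : ℕ) (U : Set (Fin k → ℂ)) (hU : IsOpen U)
    (x₀ : Fin k → ℂ) (hx₀ : x₀ ∈ U)
    (P : Fin n → (Fin k → ℂ) → ℂ)
    (hP : ∀ j, DifferentiableOn ℂ (P j) U)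
    (hrank : ∀ x ∈ U, ∀ y ∈ U,
      LinearMap.rank (fderiv ℂ (PhiMap k n P) x).toLinearMap =
        LinearMap.rank (fderiv ℂ (PhiMap k n P) y).toLinearMap) :
    ∀ v : Fin k → ℂ, (∀ j, fderiv ℂ (P j) x₀ v = 0) →
      ∃ r : ℝ, 0 < r ∧ ∃ U' : Set (Fin k → ℂ), IsOpen U' ∧ x₀ ∈ U' ∧ U' ⊆ U ∧
        ∃ φ : ℂ → (Fin k → ℂ) → (Fin k → ℂ),
          DifferentiableOn ℂ (fun p : ℂ × (Fin k → ℂ) => φ p.1 p.2)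
            (Metric.ball (0 : ℂ) r ×ˢ U') ∧
          (∀ t ∈ Metric.ball (0 : ℂ) r, ∀ x ∈ U', φ t x ∈ U) ∧
          (∀ x ∈ U', φ 0 x = x) ∧
          deriv (fun t => φ t x₀) 0 = v ∧
          (∀ j, ∀ t ∈ Metric.ball (0 : ℂ) r, ∀ x ∈ U', P j (φ t x) = P j x) ∧
          (∀ t ∈ Metric.ball (0 : ℂ) r, ∀ x ∈ U',
            (∀ j, P j x ≠ 0) → ∀ j, P j (φ t x) ≠ 0) := by
  intro v hv
  have hΦ : DifferentiableOn ℂ (PhiMap k n P) U := fun x hx =>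
    differentiableWithinAt_pi.2 fun j => hP j x hx
  have hTv : fderiv ℂ (PhiMap k n P) x₀ v = 0 := by
    rw [show PhiMap k n P = fun z j => P j z from rfl,
      fderiv_pi fun j => (hP j).differentiableAt (hU.mem_nhds hx₀)]
    ext j
    simpa using hv j
  obtain ⟨PH, hx₀PH, hPHU, hPH, hsymm, hsymm₀, hker⟩ :=
    hΦ.exists_chart_of_rank_eq hU hx₀ fun x hx => hrank x hx x₀ hx₀
  obtain ⟨r, hr, U', hU', hx₀U', hU'PH, φ, hφ, hφPH, hφ0, hφv, hφΦ⟩ :=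
    PH.exists_flow hx₀PH hPH hsymm hsymm₀ fun y hy => ⟨(hker y hy).1, (hker y hy).2 v hTv⟩
  have hPφ : ∀ j, ∀ t ∈ ball (0 : ℂ) r, ∀ x ∈ U', P j (φ t x) = P j x :=
    fun j t ht x hx => congrFun (hφΦ t ht x hx) j
  exact ⟨r, hr, U', hU', hx₀U', hU'PH.trans hPHU, φ, hφ,
    fun t ht x hx => hPHU (hφPH t ht x hx), hφ0, hφv.deriv, hPφ,
    fun t ht x hx hne j => hPφ j t ht x hx ▸ hne j⟩

/-- If `Φ = (P₁,…,P_n)` is holomorphic of constant rank on an open set `U ∋ x₀`, with all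
`P_j(x₀) = 0`, then every `v ∈ ⋂_j ker DP_j(x₀)` is the initial velocity of a holomorphic flow
`φ(t,x)` defined for `|t| < r`, `x ∈ U'`, fixing each function `P_j` (hence preserving each
hypersurface `{P_j = 0}` and its complement). -/
theorem flow_tangent_to_intersection (k n : ℕ) (U : Set (Fin k → ℂ)) (hU : IsOpen U)
    (x₀ : Fin k → ℂ) (hx₀ : x₀ ∈ U)
    (P : Fin n → (Fin k → ℂ) → ℂ)
    (hP : ∀ j, DifferentiableOn ℂ (P j) U)
    (hP0 : ∀ j, P j x₀ = 0)
    (hrank : ∀ x ∈ U, ∀ y ∈ U,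
      LinearMap.rank (fderiv ℂ (PhiMap k n P) x).toLinearMap =
        LinearMap.rank (fderiv ℂ (PhiMap k n P) y).toLinearMap) :
    ∀ v : Fin k → ℂ, (∀ j, fderiv ℂ (P j) x₀ v = 0) →
      ∃ r : ℝ, 0 < r ∧ ∃ U' : Set (Fin k → ℂ), IsOpen U' ∧ x₀ ∈ U' ∧ U' ⊆ U ∧
        ∃ φ : ℂ → (Fin k → ℂ) → (Fin k → ℂ),
          DifferentiableOn ℂ (fun p : ℂ × (Fin k → ℂ) => φ p.1 p.2)
            (Metric.ball (0 : ℂ) r ×ˢ U') ∧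
          (∀ t ∈ Metric.ball (0 : ℂ) r, ∀ x ∈ U', φ t x ∈ U) ∧
          (∀ x ∈ U', φ 0 x = x) ∧
          deriv (fun t => φ t x₀) 0 = v ∧
          (∀ j, ∀ t ∈ Metric.ball (0 : ℂ) r, ∀ x ∈ U', P j (φ t x) = P j x) ∧
          (∀ t ∈ Metric.ball (0 : ℂ) r, ∀ x ∈ U',
            (∀ j, P j x ≠ 0) → ∀ j, P j (φ t x) ≠ 0) :=
  flow_tangent_to_intersection_general k n U hU x₀ hx₀ P hP hrank
end
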